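/- If R is a reflexive binary relation on U, then for every X ⊆ U the chain apr_lower_{s∨p}(X) ⊆ apr_lower_p(X) ⊆ apr_lower_{s∧p}(X) ⊆ X ⊆ apr_upper_{s∧p}(X) ⊆ apr_upper_p(X) ⊆ apr_upper_{s∨p}(X) holds. -/

import Mathlib

variable {U : Type*}

def Rs (R : U → U → Prop) (x : U) : Set U := {y | R x y}
def Rp (R : U → U → Prop) (x : U) : Set U := {y | R y x}
def Rsp (R : U → U → Prop) (x : U) : Set U := Rs R x ∩ Rp R x
def Rvp (R : U → U → Prop) (x : U) : Set U := Rs R x ∪ Rp R x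

def aprLower (N : U → Set U) (X : Set U) : Set U := {x | N x ⊆ X}
def aprUpper (N : U → Set U) (X : Set U) : Set U := {x | (N x ∩ X).Nonempty}

section Approximations

variable {N M : U → Set U} {X : Set U}

theorem aprLower_anti (hNM : ∀ x, N x ⊆ M x) : aprLower M X ⊆ aprLower N X :=
  fun x hx => (hNM x).trans hx

theorem aprUpper_mono (hNM : ∀ x, N x ⊆ M x) : aprUpper N X ⊆ aprUpper M X :=
  fun x hx => hx.mono (Set.inter_subset_inter_left X (hNM x))

theorem aprLower_subset (hN : ∀ x, x ∈ N x) : aprLower N X ⊆ X :=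
  fun x hx => hx (hN x)

theorem subset_aprUpper (hN : ∀ x, x ∈ N x) : X ⊆ aprUpper N X :=
  fun x hx => ⟨x, hN x, hx⟩

end Approximations

section Neighborhoods

variable (R : U → U → Prop)

theorem Rsp_subset_Rp (x : U) : Rsp R x ⊆ Rp R x :=
  Set.inter_subset_right

theorem Rp_subset_Rvp (x : U) : Rp R x ⊆ Rvp R x :=
  Set.subset_union_right

theorem self_mem_Rsp {R : U → U → Prop} (hrefl : ∀ x, R x x) (x : U) : x ∈ Rsp R x :=
  ⟨hrefl x, hrefl x⟩

end Neighborhoods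

theorem stmt19 (R : U → U → Prop) (hrefl : ∀ x, R x x) (X : Set U) : aprLower (Rvp R) X ⊆ aprLower (Rp R) X ∧ aprLower (Rp R) X ⊆ aprLower (Rsp R) X ∧ aprLower (Rsp R) X ⊆ X ∧ X ⊆ aprUpper (Rsp R) X ∧ aprUpper (Rsp R) X ⊆ aprUpper (Rp R) X ∧ aprUpper (Rp R) X ⊆ aprUpper (Rvp R) X :=
  ⟨aprLower_anti (Rp_subset_Rvp R), aprLower_anti (Rsp_subset_Rp R),
    aprLower_subset (self_mem_Rsp hrefl), subset_aprUpper (self_mem_Rsp hrefl),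
    aprUpper_mono (Rsp_subset_Rp R), aprUpper_mono (Rp_subset_Rvp R)⟩
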